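/- arXiv:2209.02979 — 3 statements merged into one kernel-verified Lean document; each statement's English description precedes it below -/
import Mathlib

section
/- In a graded 2D open-closed TQFT (relations (1)-(5)), the additional relations hold: (a) (ζ⊗1)c_C = (-1)^{|λ_C|+|λ_A|}(1⊗ζ*)c_A, and (b) μ_C(ζ*⊗1) = ζ* μ_A (1⊗ζ), i.e. the cozipper intertwines the right C-module structures, where A is a C-module via the algebra map ζ. -/
open TensorProduct LinearMap
open scoped TensorProduct DirectSum

namespace GradedCoFrob

variable {R : Type} [CommRing R] {M : Type} [AddCommGroup M] [Module R M]

/-- The Koszul sign `(-1)^n` for `n : ℤ`. -/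
def ksign (n : ℤ) : ℤ := (((-1 : ℤˣ) ^ n : ℤˣ) : ℤ)

variable (𝒜 : ℤ → Submodule R M) [DirectSum.Decomposition 𝒜]

/-- Build a linear map `M →ₗ N` out of its values on the homogeneous pieces,
bundled linearly in the family of values. -/
noncomputable def fromPiecesHom {N : Type} [AddCommGroup N] [Module R N] :
    (∀ i : ℤ, 𝒜 i →ₗ[R] N) →ₗ[R] (M →ₗ[R] N) :=
  (LinearMap.lcomp R N (DirectSum.decomposeLinearEquiv 𝒜).toLinearMap).comp
    (DFinsupp.lsum R (M := fun i => 𝒜 i) (N := N)).toLinearMap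

/-- Build a linear map `M →ₗ N` out of its values on the homogeneous pieces. -/
noncomputable def fromPieces {N : Type} [AddCommGroup N] [Module R N]
    (f : ∀ i : ℤ, 𝒜 i →ₗ[R] N) : M →ₗ[R] N :=
  fromPiecesHom 𝒜 f

/-- Build a bilinear map `M →ₗ M →ₗ N` out of its values on pairs of homogeneous pieces. -/
noncomputable def fromPieces₂ {N : Type} [AddCommGroup N] [Module R N]
    (f : ∀ i j : ℤ, 𝒜 i →ₗ[R] 𝒜 j →ₗ[R] N) : M →ₗ[R] M →ₗ[R] N :=
  fromPieces 𝒜 (fun i => (fromPiecesHom 𝒜).comp (LinearMap.pi (fun j => f i j)))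

/-- The operator multiplying the degree `i` component by the Koszul sign `(-1)^(d*i)`. -/
noncomputable def signAction (d : ℤ) : M →ₗ[R] M :=
  fromPieces 𝒜 (fun i => ksign (d * i) • (𝒜 i).subtype)

/-- The Koszul twist `τ(a ⊗ b) = (-1)^{|a||b|} b ⊗ a`. -/
noncomputable def twist : M ⊗[R] M →ₗ[R] M ⊗[R] M :=
  TensorProduct.lift (fromPieces₂ 𝒜 (fun i j =>
    ksign (i * j) • ((((TensorProduct.mk R M M).flip).comp (𝒜 i).subtype).compl₂
      (𝒜 j).subtype)))

/-- Left contraction `(f ⊗ 1)(x ⊗ y) = f(x) • y` (no Koszul sign since `1` has degree `0`). -/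
noncomputable def contrL {N : Type} [AddCommGroup N] [Module R N]
    (f : N →ₗ[R] R) : N ⊗[R] M →ₗ[R] M :=
  TensorProduct.lift ((LinearMap.lsmul R M).comp f)

/-- Right contraction with Koszul sign:
`(1 ⊗ f)(x ⊗ y) = (-1)^{d|x|} f(y) • x` where `d` is the degree of `f`. -/
noncomputable def contrR {N : Type} [AddCommGroup N] [Module R N]
    (f : N →ₗ[R] R) (d : ℤ) : M ⊗[R] N →ₗ[R] M :=
  TensorProduct.lift ((((LinearMap.lsmul R M).comp f).flip).comp (signAction 𝒜 d))

/-- Koszul-signed evaluation of a pair of functionals on a tensor: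
`(x ⊗ y) ↦ f((-1)^{d₁|x|} x) * g((-1)^{d₂|y|} y)`. -/
noncomputable def ev2 (f g : M →ₗ[R] R) (d₁ d₂ : ℤ) : M ⊗[R] M →ₗ[R] R :=
  TensorProduct.lift (((LinearMap.mul R R).comp (f.comp (signAction 𝒜 d₁))).compl₂
    (g.comp (signAction 𝒜 d₂)))

/-- The map `c⃗ : A^∨ → A`, `f ↦ (-1)^{|f||c|}(f ⊗ 1)c`, implemented by putting the sign
`(-1)^{dc |x|}` on the first tensor factor of the copairing `c` (of degree `dc`). -/
noncomputable def cvec (c : M ⊗[R] M) (dc : ℤ) : (M →ₗ[R] R) →ₗ[R] M :=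
  (LinearMap.applyₗ ((LinearMap.rTensor M (signAction 𝒜 dc)) c)).comp
    ((TensorProduct.lift.equiv (RingHom.id R) M M M).toLinearMap.comp
      (LinearMap.llcomp R M R (M →ₗ[R] M) (LinearMap.lsmul R M)))

/-- The operation `(1 ⊗ c ⊗ 1) : A ⊗ A → (A ⊗ A) ⊗ (A ⊗ A)`,
`a ⊗ b ↦ (-1)^{|c||a|} (a ⊗ c₁) ⊗ (c₂ ⊗ b)` for a copairing `c` of degree `dc`. -/
noncomputable def midIns (c : M ⊗[R] M) (dc : ℤ) :
    M ⊗[R] M →ₗ[R] (M ⊗[R] M) ⊗[R] (M ⊗[R] M) :=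
  (TensorProduct.assoc R (M ⊗[R] M) M M).toLinearMap.comp
    (LinearMap.rTensor M
      (((TensorProduct.assoc R M M M).symm.toLinearMap).comp
        (((TensorProduct.mk R M (M ⊗[R] M)).flip c).comp (signAction 𝒜 dc))))

/-- The Koszul-signed cyclic permutation `σ(a⊗b⊗c) = (-1)^{(|a|+|b|)|c|} c⊗a⊗b`. -/
noncomputable def cyc : (M ⊗[R] M) ⊗[R] M →ₗ[R] (M ⊗[R] M) ⊗[R] M :=
  (LinearMap.rTensor M (twist 𝒜)).comp
    ((TensorProduct.assoc R M M M).symm.toLinearMap.comp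
      ((LinearMap.lTensor M (twist 𝒜)).comp (TensorProduct.assoc R M M M).toLinearMap))

/-- The submodule `A_i ⊗ A_j ⊆ A ⊗ A`. -/
noncomputable def tpiece (i j : ℤ) : Submodule R (M ⊗[R] M) :=
  LinearMap.range (TensorProduct.map (𝒜 i).subtype (𝒜 j).subtype)

/-- The degree `k` part `⨁_{i+j=k} A_i ⊗ A_j` of `A ⊗ A`. -/
noncomputable def tgrade (k : ℤ) : Submodule R (M ⊗[R] M) :=
  ⨆ i : ℤ, tpiece 𝒜 i (k - i)

/-- A product is homogeneous of degree `d`. -/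
def IsHomogProd (d : ℤ) (mu : M ⊗[R] M →ₗ[R] M) : Prop :=
  ∀ i j : ℤ, ∀ x ∈ 𝒜 i, ∀ y ∈ 𝒜 j, mu (x ⊗ₜ[R] y) ∈ 𝒜 (i + j + d)

/-- A coproduct is homogeneous of degree `d`. -/
def IsHomogCoprod (d : ℤ) (lam : M →ₗ[R] M ⊗[R] M) : Prop :=
  ∀ k : ℤ, ∀ x ∈ 𝒜 k, lam x ∈ tgrade 𝒜 (k + d)

/-- A scalar-valued functional is homogeneous of degree `d`. -/
def IsHomogFun (d : ℤ) (f : M →ₗ[R] R) : Prop :=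
  ∀ i : ℤ, i ≠ -d → ∀ x ∈ 𝒜 i, f x = 0

/-- A pairing is homogeneous of degree `d`. -/
def IsHomogPairing (d : ℤ) (p : M ⊗[R] M →ₗ[R] R) : Prop :=
  ∀ i j : ℤ, i + j ≠ -d → ∀ x ∈ 𝒜 i, ∀ y ∈ 𝒜 j, p (x ⊗ₜ[R] y) = 0

end GradedCoFrob
namespace GradedCoFrob

/-- A unital coFrobenius bialgebra structure on a ℤ-graded module
(Definition `defi:coFrobenius-unital-bialgebra`), with all Koszul sign conventions explicit. -/
structure UnitalCoFrob (R : Type) [CommRing R] {M : Type} [AddCommGroup M] [Module R M]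
    (𝒜 : ℤ → Submodule R M) [DirectSum.Decomposition 𝒜] where
  mu : M ⊗[R] M →ₗ[R] M
  lam : M →ₗ[R] M ⊗[R] M
  unit : M
  dm : ℤ
  dl : ℤ
  mu_homog : IsHomogProd 𝒜 dm mu
  lam_homog : IsHomogCoprod 𝒜 dl lam
  unit_homog : unit ∈ 𝒜 (-dm)
  /-- graded associativity `μ(μ⊗1) = (-1)^{|μ|} μ(1⊗μ)` -/
  mu_assoc : mu.comp (LinearMap.rTensor M mu) =
    ksign dm • (mu.comp ((TensorProduct.map (signAction 𝒜 dm) mu).comp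
      (TensorProduct.assoc R M M M).toLinearMap))
  /-- `(-1)^{|μ|} μ(η ⊗ 1) = 1` -/
  unit_left : ksign dm • (mu.comp ((TensorProduct.mk R M M) unit)) = LinearMap.id
  /-- `μ(1 ⊗ η) = 1` -/
  unit_right : mu.comp (((TensorProduct.mk R M M).flip unit).comp (signAction 𝒜 (-dm))) =
    LinearMap.id
  cop : M ⊗[R] M
  /-- the copairing `c = (-1)^{|λ||μ|+|μ|} λη` -/
  cop_def : cop = ksign (dl * dm + dm) • lam unit
  /-- `λ = (1⊗μ)(c⊗1)` -/
  cofrob_left : lam = (TensorProduct.map (signAction 𝒜 dm) mu).comp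
    ((TensorProduct.assoc R M M M).toLinearMap.comp (TensorProduct.mk R (M ⊗[R] M) M cop))
  /-- `λ = (-1)^{|μ|}(μ⊗1)(1⊗c)` -/
  cofrob_right : lam = ksign dm • ((LinearMap.rTensor M mu).comp
    ((TensorProduct.assoc R M M M).symm.toLinearMap.comp
      (((TensorProduct.mk R M (M ⊗[R] M)).flip cop).comp (signAction 𝒜 (dl - dm)))))
  /-- `τc = (-1)^{|λ|} c` -/
  cop_symm : twist 𝒜 cop = ksign dl • cop

/-- A biunital coFrobenius bialgebra structure on a ℤ-graded module
(Definition `defi:biunital-coFrobenius-bialgebra`), with all Koszul sign conventions explicit. -/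
structure BiunitalCoFrob (R : Type) [CommRing R] {M : Type} [AddCommGroup M] [Module R M]
    (𝒜 : ℤ → Submodule R M) [DirectSum.Decomposition 𝒜] where
  mu : M ⊗[R] M →ₗ[R] M
  lam : M →ₗ[R] M ⊗[R] M
  unit : M
  counit : M →ₗ[R] R
  dm : ℤ
  dl : ℤ
  mu_homog : IsHomogProd 𝒜 dm mu
  lam_homog : IsHomogCoprod 𝒜 dl lam
  unit_homog : unit ∈ 𝒜 (-dm)
  counit_homog : IsHomogFun 𝒜 (-dl) counit
  mu_assoc : mu.comp (LinearMap.rTensor M mu) =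
    ksign dm • (mu.comp ((TensorProduct.map (signAction 𝒜 dm) mu).comp
      (TensorProduct.assoc R M M M).toLinearMap))
  /-- graded coassociativity `(λ⊗1)λ = (-1)^{|λ|}(1⊗λ)λ` -/
  lam_coassoc : (LinearMap.rTensor M lam).comp lam =
    ksign dl • ((TensorProduct.assoc R M M M).symm.toLinearMap.comp
      ((TensorProduct.map (signAction 𝒜 dl) lam).comp lam))
  unit_left : ksign dm • (mu.comp ((TensorProduct.mk R M M) unit)) = LinearMap.id
  unit_right : mu.comp (((TensorProduct.mk R M M).flip unit).comp (signAction 𝒜 (-dm))) =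
    LinearMap.id
  /-- `(ε⊗1)λ = 1` -/
  counit_left : (contrL counit).comp lam = LinearMap.id
  /-- `(-1)^{|λ|}(1⊗ε)λ = 1` -/
  counit_right : ksign dl • ((contrR 𝒜 counit (-dl)).comp lam) = LinearMap.id
  cop : M ⊗[R] M
  cop_def : cop = ksign (dl * dm + dm) • lam unit
  pr : M ⊗[R] M →ₗ[R] R
  /-- the pairing `p = (-1)^{|λ|} εμ` -/
  pr_def : pr = ksign dl • (counit.comp mu)
  cofrob_left : lam = (TensorProduct.map (signAction 𝒜 dm) mu).comp
    ((TensorProduct.assoc R M M M).toLinearMap.comp (TensorProduct.mk R (M ⊗[R] M) M cop))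
  cofrob_right : lam = ksign dm • ((LinearMap.rTensor M mu).comp
    ((TensorProduct.assoc R M M M).symm.toLinearMap.comp
      (((TensorProduct.mk R M (M ⊗[R] M)).flip cop).comp (signAction 𝒜 (dl - dm)))))
  /-- `μ = (-1)^{|μ||λ|+|λ|}(p⊗1)(1⊗λ)` -/
  cofrob_pr_left : mu = ksign (dm * dl + dl) • ((contrL pr).comp
    ((TensorProduct.assoc R M M M).symm.toLinearMap.comp
      (TensorProduct.map (signAction 𝒜 dl) lam)))
  /-- `μ = (-1)^{|μ||λ|}(1⊗p)(λ⊗1)` -/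
  cofrob_pr_right : mu = ksign (dm * dl) • ((contrR 𝒜 pr (dm - dl)).comp
    ((TensorProduct.assoc R M M M).toLinearMap.comp (LinearMap.rTensor M lam)))
  cop_symm : twist 𝒜 cop = ksign dl • cop
  /-- `pτ = (-1)^{|μ|} p` -/
  pr_symm : pr.comp (twist 𝒜) = ksign dm • pr

end GradedCoFrob

/-!
(a) Symmetry of the two copairings turns `(ζ ⊗ 1) c_C` into the Koszul twist of `(1 ⊗ ζ) c_C`,
hence by (5) into the twist of `(ζ* ⊗ 1) c_A`, and the twist is natural in `ζ` and `ζ*`.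

(b) The snake identity `(1 ⊗ ε_A) λ_A = ±1` together with (5) expresses the cozipper through
the closed copairing: `ζ* a = ± (1 ⊗ g_a) c_C` with `g_a = ε_A μ_A (ζ - ⊗ a)`. For homogeneous
`a` and `x`, commutativity of `C` and the two Frobenius relations for `λ_C` turn
`μ_C (ζ* a ⊗ x)` into `± (1 ⊗ g_a) λ_C x`; associativity of `μ_A`, centrality of `ζ x` and
multiplicativity of `ζ` give `g_{a ζ x} = ± g_a ∘ μ_C (- ⊗ x)`, which turns `ζ* (a ζ x)` into
the same expression. The Koszul signs of the two sides agree.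
-/

namespace GradedCoFrob

section Signs

lemma ksign_eq_negOnePow (n : ℤ) : ksign n = (n.negOnePow : ℤ) := rfl

@[simp]
lemma ksign_zero : ksign 0 = 1 := rfl

lemma ksign_add (a b : ℤ) : ksign (a + b) = ksign a * ksign b := by
  simp only [ksign_eq_negOnePow, Int.negOnePow_add, Units.val_mul]

lemma ksign_congr {a b : ℤ} (h : Even (a - b)) : ksign a = ksign b := by
  simp only [ksign_eq_negOnePow, (Int.negOnePow_eq_iff a b).2 h]

lemma ksign_neg (a : ℤ) : ksign (-a) = ksign a := by
  simp only [ksign_eq_negOnePow, Int.negOnePow_neg]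

lemma ksign_mul_self (a : ℤ) : ksign a * ksign a = 1 := by
  rw [← ksign_add, ksign_congr (b := 0) ⟨a, by ring⟩, ksign_zero]

lemma ksign_smul_of_even {M : Type} [AddCommGroup M] {a : ℤ} (h : Even a) (x : M) :
    ksign a • x = x := by
  rw [ksign_congr (b := 0) (by simpa using h), ksign_zero, one_smul]

lemma ksign_smul_smul {M : Type} [AddCommGroup M] (a : ℤ) (x : M) :
    ksign a • ksign a • x = x := by
  rw [smul_smul, ksign_mul_self, one_smul]

end Signs

section Graded

variable {R : Type} [CommRing R] {M N : Type} [AddCommGroup M] [Module R M]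
  [AddCommGroup N] [Module R N]

@[elab_as_elim]
lemma tgrade_induction {𝒜 : ℤ → Submodule R M} {l : ℤ} {motive : M ⊗[R] M → Prop}
    (zero : motive 0)
    (tmul : ∀ (i : ℤ) (x y : M), x ∈ 𝒜 i → y ∈ 𝒜 (l - i) → motive (x ⊗ₜ[R] y))
    (add : ∀ s t, motive s → motive t → motive (s + t)) (t : M ⊗[R] M)
    (ht : t ∈ tgrade 𝒜 l) : motive t := by
  refine Submodule.iSup_induction (motive := motive) _ ht ?_ zero add
  rintro i s ⟨w, rfl⟩
  induction w using TensorProduct.induction_on with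
  | zero => simpa using zero
  | add a b ha hb => rw [map_add]; exact add _ _ ha hb
  | tmul a b => exact tmul i _ _ a.2 b.2

lemma IsHomogFun.comp {𝒜 : ℤ → Submodule R M} {ℬ : ℤ → Submodule R N} {d : ℤ}
    {f : N →ₗ[R] R} (hf : IsHomogFun ℬ d f) {g : M →ₗ[R] N}
    (hg : ∀ i, ∀ x ∈ 𝒜 i, g x ∈ ℬ i) : IsHomogFun 𝒜 d (f ∘ₗ g) :=
  fun i hi x hx => hf i hi (g x) (hg i x hx)

variable {𝒜 : ℤ → Submodule R M} [DirectSum.Decomposition 𝒜]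
  {ℬ : ℤ → Submodule R N} [DirectSum.Decomposition ℬ]

lemma fromPieces_apply {P : Type} [AddCommGroup P] [Module R P] (f : ∀ i : ℤ, 𝒜 i →ₗ[R] P)
    {i : ℤ} {x : M} (hx : x ∈ 𝒜 i) : fromPieces 𝒜 f x = f i ⟨x, hx⟩ := by
  change DFinsupp.lsum R f (DirectSum.decompose 𝒜 ((⟨x, hx⟩ : 𝒜 i) : M)) = _
  rw [DirectSum.decompose_coe]
  exact DFinsupp.lsum_single _ _ _ _

lemma signAction_apply {d i : ℤ} {x : M} (hx : x ∈ 𝒜 i) :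
    signAction 𝒜 d x = ksign (d * i) • x := by
  rw [signAction, fromPieces_apply _ hx]; rfl

@[elab_as_elim]
lemma homog_induction {motive : M → Prop} (zero : motive 0)
    (hom : ∀ (i : ℤ) (x : M), x ∈ 𝒜 i → motive x)
    (add : ∀ x y, motive x → motive y → motive (x + y)) (x : M) : motive x :=
  DirectSum.Decomposition.inductionOn 𝒜 zero (fun {i} m => hom i m m.2) add x

lemma ext_homog {P : Type} [AddCommGroup P] [Module R P] {f g : M →ₗ[R] P}
    (h : ∀ (i : ℤ) (x : M), x ∈ 𝒜 i → f x = g x) : f = g :=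
  LinearMap.ext fun x => by
    induction x using homog_induction (𝒜 := 𝒜) with
    | zero => simp
    | hom i x hx => exact h i x hx
    | add x y hx hy => rw [map_add, map_add, hx, hy]

lemma signAction_zero : signAction 𝒜 0 = LinearMap.id :=
  ext_homog fun i x hx => by rw [signAction_apply hx, zero_mul, ksign_zero, one_smul, id_apply]

@[elab_as_elim]
lemma tensor_homog_induction {motive : M ⊗[R] N → Prop} (zero : motive 0)
    (tmul : ∀ (i j : ℤ) (x : M) (y : N), x ∈ 𝒜 i → y ∈ ℬ j → motive (x ⊗ₜ[R] y))
    (add : ∀ s t, motive s → motive t → motive (s + t)) (t : M ⊗[R] N) : motive t := by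
  induction t using TensorProduct.induction_on with
  | zero => exact zero
  | add s t hs ht => exact add _ _ hs ht
  | tmul x y =>
      induction x using homog_induction (𝒜 := 𝒜) with
      | zero => rw [TensorProduct.zero_tmul]; exact zero
      | add x x' hx hx' => rw [TensorProduct.add_tmul]; exact add _ _ hx hx'
      | hom i x hx =>
          induction y using homog_induction (𝒜 := ℬ) with
          | zero => rw [TensorProduct.tmul_zero]; exact zero
          | add y y' hy hy' => rw [TensorProduct.tmul_add]; exact add _ _ hy hy'
          | hom j y hy => exact tmul i j x y hx hy

lemma tensor_ext_homog {P : Type} [AddCommGroup P] [Module R P] {f g : M ⊗[R] N →ₗ[R] P}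
    (h : ∀ (i j : ℤ) (x : M) (y : N), x ∈ 𝒜 i → y ∈ ℬ j → f (x ⊗ₜ y) = g (x ⊗ₜ y)) :
    f = g :=
  LinearMap.ext fun t => by
    induction t using tensor_homog_induction (𝒜 := 𝒜) (ℬ := ℬ) with
    | zero => simp
    | tmul i j x y hx hy => exact h i j x y hx hy
    | add s t hs ht => rw [map_add, map_add, hs, ht]

lemma rTensor_signAction_of_mem_tgrade (k : ℤ) {l : ℤ} {t : M ⊗[R] M}
    (ht : t ∈ tgrade 𝒜 l) :
    rTensor M (signAction 𝒜 k) t = ksign (k * l) • lTensor M (signAction 𝒜 k) t := by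
  refine tgrade_induction (by simp) (fun i x y hx hy => ?_)
    (fun s t hs ht => by simp only [map_add, hs, ht, smul_add]) t ht
  rw [rTensor_tmul, lTensor_tmul, signAction_apply hx, signAction_apply hy,
    TensorProduct.tmul_smul, smul_smul, ← ksign_add, ← TensorProduct.smul_tmul']
  exact congrArg (· • x ⊗ₜ y) (ksign_congr ⟨k * i - k * l, by ring⟩)

/-- `twist` for two different graded modules; `twist 𝒜` is `koszulComm 𝒜 𝒜` by definition. -/
noncomputable def koszulComm (𝒜 : ℤ → Submodule R M) (ℬ : ℤ → Submodule R N)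
    [DirectSum.Decomposition 𝒜] [DirectSum.Decomposition ℬ] : M ⊗[R] N →ₗ[R] N ⊗[R] M :=
  TensorProduct.lift (fromPieces 𝒜 (fun i => (fromPiecesHom ℬ).comp
    (LinearMap.pi (fun j => ksign (i * j) •
      ((((TensorProduct.mk R N M).flip).comp (𝒜 i).subtype).compl₂ (ℬ j).subtype)))))

lemma koszulComm_tmul {i j : ℤ} {x : M} {y : N} (hx : x ∈ 𝒜 i) (hy : y ∈ ℬ j) :
    koszulComm 𝒜 ℬ (x ⊗ₜ y) = ksign (i * j) • (y ⊗ₜ x) := by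
  rw [koszulComm, TensorProduct.lift.tmul, fromPieces_apply _ hx, LinearMap.comp_apply,
    ← fromPieces, fromPieces_apply _ hy]
  simp

lemma twist_tmul {i j : ℤ} {x y : M} (hx : x ∈ 𝒜 i) (hy : y ∈ 𝒜 j) :
    twist 𝒜 (x ⊗ₜ y) = ksign (i * j) • (y ⊗ₜ x) :=
  koszulComm_tmul hx hy

lemma koszulComm_lTensor {f : M →ₗ[R] N} (hf : ∀ i, ∀ x ∈ 𝒜 i, f x ∈ ℬ i) (t : M ⊗[R] M) :
    koszulComm 𝒜 ℬ (lTensor M f t) = rTensor M f (twist 𝒜 t) := by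
  induction t using tensor_homog_induction (𝒜 := 𝒜) (ℬ := 𝒜) with
  | zero => simp
  | add s t hs ht => simp only [map_add, hs, ht]
  | tmul i j x y hx hy =>
    rw [lTensor_tmul, koszulComm_tmul hx (hf j y hy), twist_tmul hx hy, map_zsmul,
      rTensor_tmul]

lemma koszulComm_rTensor {e : ℤ} {f : N →ₗ[R] M} (hf : ∀ i, ∀ x ∈ ℬ i, f x ∈ 𝒜 (i + e))
    (t : N ⊗[R] N) :
    koszulComm 𝒜 ℬ (rTensor N f t) = TensorProduct.map (signAction ℬ e) f (twist ℬ t) := by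
  induction t using tensor_homog_induction (𝒜 := ℬ) (ℬ := ℬ) with
  | zero => simp
  | add s t hs ht => simp only [map_add, hs, ht]
  | tmul i j x y hx hy =>
    rw [rTensor_tmul, koszulComm_tmul (hf i x hx) hy, twist_tmul hx hy, map_zsmul,
      TensorProduct.map_tmul, signAction_apply hy, ← TensorProduct.smul_tmul', smul_smul,
      ← ksign_add, add_mul, mul_comm e j]

end Graded

section Contraction

variable {R : Type} [CommRing R] {M N P : Type} [AddCommGroup M] [Module R M]
  [AddCommGroup N] [Module R N] [AddCommGroup P] [Module R P]

/-- The contraction `x ⊗ n ↦ f n • x`, i.e. `contrR` without the Koszul sign. -/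
noncomputable def contrRight (f : N →ₗ[R] R) : M ⊗[R] N →ₗ[R] M :=
  TensorProduct.lift ((LinearMap.lsmul R M).comp f).flip

@[simp]
lemma contrRight_tmul (f : N →ₗ[R] R) (x : M) (n : N) : contrRight f (x ⊗ₜ n) = f n • x := by
  simp [contrRight]

lemma contrRight_lTensor (f : P →ₗ[R] R) (g : N →ₗ[R] P) (t : M ⊗[R] N) :
    contrRight f (lTensor M g t) = contrRight (f ∘ₗ g) t := by
  induction t using TensorProduct.induction_on with
  | zero => simp
  | tmul x n => simp
  | add s t hs ht => simp only [map_add, hs, ht]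

lemma map_contrRight (g : M →ₗ[R] P) (f : N →ₗ[R] R) (t : M ⊗[R] N) :
    g (contrRight f t) = contrRight f (rTensor N g t) := by
  induction t using TensorProduct.induction_on with
  | zero => simp
  | tmul x n => simp
  | add s t hs ht => simp only [map_add, hs, ht]

lemma contrRight_smul (c : ℤ) (f : N →ₗ[R] R) (t : M ⊗[R] N) :
    contrRight (c • f) t = c • contrRight f t := by
  induction t using TensorProduct.induction_on with
  | zero => simp
  | tmul x n => simp [mul_smul, Int.cast_smul_eq_zsmul]
  | add s t hs ht => simp only [map_add, hs, ht, smul_add]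

lemma contrR_eq_contrRight_comp (𝒜 : ℤ → Submodule R M) [DirectSum.Decomposition 𝒜]
    (f : N →ₗ[R] R) (d : ℤ) :
    contrR 𝒜 f d = contrRight f ∘ₗ rTensor N (signAction 𝒜 d) :=
  TensorProduct.ext' fun x n => by simp [contrR]

variable {𝒜 : ℤ → Submodule R M} [DirectSum.Decomposition 𝒜]
  {ℬ : ℤ → Submodule R N} [DirectSum.Decomposition ℬ]

lemma contrRight_lTensor_signAction {d : ℤ} {f : N →ₗ[R] R} (hf : IsHomogFun ℬ d f) (s : ℤ)
    (t : M ⊗[R] N) :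
    contrRight f (lTensor M (signAction ℬ s) t) = ksign (s * d) • contrRight f t := by
  induction t using TensorProduct.induction_on with
  | zero => simp
  | add t t' ht ht' => simp only [map_add, ht, ht', smul_add]
  | tmul x y =>
    induction y using homog_induction (𝒜 := ℬ) with
    | zero => simp
    | add y y' hy hy' => simp only [TensorProduct.tmul_add, map_add, hy, hy', smul_add]
    | hom j y hy =>
      rw [lTensor_tmul, signAction_apply hy, contrRight_tmul, contrRight_tmul, map_zsmul,
        smul_assoc]
      by_cases hj : j = -d
      · rw [hj, mul_neg, ksign_neg]
      · rw [hf j hj y hy, zero_smul, smul_zero, smul_zero]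

lemma contrRight_rTensor_signAction {d l : ℤ} {f : M →ₗ[R] R} (hf : IsHomogFun 𝒜 d f) (s : ℤ)
    {t : M ⊗[R] M} (ht : t ∈ tgrade 𝒜 l) :
    contrRight f (rTensor M (signAction 𝒜 s) t) = ksign (s * (l + d)) • contrRight f t := by
  refine tgrade_induction (by simp) (fun i x y hx hy => ?_)
    (fun t t' ht ht' => by simp only [map_add, ht, ht', smul_add]) t ht
  rw [rTensor_tmul, signAction_apply hx, ← TensorProduct.smul_tmul', map_zsmul]
  by_cases hi : i = l + d
  · rw [hi]
  · rw [contrRight_tmul, hf (l - i) (by omega) y hy, zero_smul, smul_zero, smul_zero]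

end Contraction

namespace BiunitalCoFrob

variable {R : Type} [CommRing R] {M : Type} [AddCommGroup M] [Module R M]
  {𝒜 : ℤ → Submodule R M} [DirectSum.Decomposition 𝒜] {B : BiunitalCoFrob R 𝒜}

noncomputable def mulLeft (B : BiunitalCoFrob R 𝒜) (x : M) : M →ₗ[R] M :=
  B.mu ∘ₗ TensorProduct.mk R M M x

noncomputable def mulRight (B : BiunitalCoFrob R 𝒜) (x : M) : M →ₗ[R] M :=
  B.mu ∘ₗ (TensorProduct.mk R M M).flip x

@[simp]
lemma mulLeft_apply (x y : M) : B.mulLeft x y = B.mu (x ⊗ₜ y) := rfl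

@[simp]
lemma mulRight_apply (x y : M) : B.mulRight x y = B.mu (y ⊗ₜ x) := rfl

lemma cop_mem_tgrade (B : BiunitalCoFrob R 𝒜) : B.cop ∈ tgrade 𝒜 (-B.dm + B.dl) := by
  rw [B.cop_def]
  exact Submodule.smul_of_tower_mem _ _ (B.lam_homog _ _ B.unit_homog)

lemma mu_mem (hdm : B.dm = 0) {i j : ℤ} {x y : M} (hx : x ∈ 𝒜 i) (hy : y ∈ 𝒜 j) :
    B.mu (x ⊗ₜ y) ∈ 𝒜 (i + j) := by
  simpa [hdm] using B.mu_homog i j x hx y hy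

lemma mu_mu_tmul (hdm : B.dm = 0) (x y z : M) :
    B.mu (B.mu (x ⊗ₜ y) ⊗ₜ z) = B.mu (x ⊗ₜ B.mu (y ⊗ₜ z)) := by
  simpa [hdm, signAction_zero] using LinearMap.congr_fun B.mu_assoc ((x ⊗ₜ y) ⊗ₜ z)

lemma lam_eq_lTensor_mulRight_cop (hdm : B.dm = 0) (x : M) :
    B.lam x = lTensor M (B.mulRight x) B.cop := by
  rw [B.cofrob_left, hdm, signAction_zero]
  simp only [LinearMap.comp_apply, TensorProduct.mk_apply, LinearEquiv.coe_toLinearMap]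
  generalize B.cop = t
  induction t using TensorProduct.induction_on with
  | zero => simp
  | tmul y z => simp
  | add s t hs ht => simp only [TensorProduct.add_tmul, map_add, hs, ht]

lemma rTensor_mulLeft_cop (hdm : B.dm = 0) {k : ℤ} {x : M} (hx : x ∈ 𝒜 k) :
    rTensor M (B.mulLeft x) B.cop = ksign (B.dl * k) • B.lam x := by
  rw [B.cofrob_right, hdm, sub_zero, ksign_zero, one_smul]
  simp only [LinearMap.comp_apply, LinearMap.flip_apply, signAction_apply hx]
  generalize B.cop = t
  induction t using TensorProduct.induction_on with
  | zero => simp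
  | tmul y z => simp [ksign_smul_smul]
  | add s t hs ht => simp only [map_add, hs, ht, smul_add]

lemma isHomogFun_counit_mulRight (hdm : B.dm = 0) {α : ℤ} {a : M} (ha : a ∈ 𝒜 α) :
    IsHomogFun 𝒜 (α - B.dl) (B.counit ∘ₗ B.mulRight a) := by
  intro j hj y hy
  exact B.counit_homog _ (by omega) _ (mu_mem hdm hy ha)

lemma contrRight_counit_mulRight_cop (hdm : B.dm = 0) {α : ℤ} {a : M} (ha : a ∈ 𝒜 α) :
    contrRight (B.counit ∘ₗ B.mulRight a) B.cop = ksign (B.dl + B.dl * α) • a := by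
  have hcop : B.cop ∈ tgrade 𝒜 B.dl := by simpa [hdm] using B.cop_mem_tgrade
  have snake := LinearMap.congr_fun B.counit_right a
  rw [LinearMap.smul_apply, LinearMap.comp_apply, contrR_eq_contrRight_comp,
    LinearMap.comp_apply, lam_eq_lTensor_mulRight_cop hdm, ← LinearMap.comp_apply (rTensor _ _),
    LinearMap.rTensor_comp_lTensor, ← LinearMap.lTensor_comp_rTensor, LinearMap.comp_apply,
    contrRight_lTensor, contrRight_rTensor_signAction (isHomogFun_counit_mulRight hdm ha) _ hcop,
    LinearMap.id_apply] at snake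
  conv_rhs => rw [← snake, smul_smul, smul_smul, ← ksign_add, ← ksign_add]
  rw [ksign_smul_of_even ⟨B.dl, by ring⟩]

lemma mu_tmul_comm (hdm : B.dm = 0) (hcomm : B.mu ∘ₗ twist 𝒜 = ksign B.dm • B.mu)
    {i j : ℤ} {x y : M} (hx : x ∈ 𝒜 i) (hy : y ∈ 𝒜 j) :
    B.mu (x ⊗ₜ y) = ksign (i * j) • B.mu (y ⊗ₜ x) := by
  have h := LinearMap.congr_fun hcomm (y ⊗ₜ x)
  rw [LinearMap.comp_apply, twist_tmul hy hx, map_zsmul, hdm, ksign_zero, one_smul] at h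
  rw [← h, mul_comm j i, ksign_smul_smul]

lemma mulRight_eq_mulLeft_comp_signAction (hdm : B.dm = 0)
    (hcomm : B.mu ∘ₗ twist 𝒜 = ksign B.dm • B.mu) {k : ℤ} {x : M} (hx : x ∈ 𝒜 k) :
    B.mulRight x = B.mulLeft x ∘ₗ signAction 𝒜 k :=
  ext_homog fun j y hy => by
    rw [mulRight_apply, LinearMap.comp_apply, signAction_apply hy, map_zsmul, mulLeft_apply,
      mu_tmul_comm hdm hcomm hy hx, mul_comm]

lemma rTensor_mulRight_cop (hdm : B.dm = 0) (hcomm : B.mu ∘ₗ twist 𝒜 = ksign B.dm • B.mu)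
    {k : ℤ} {x : M} (hx : x ∈ 𝒜 k) :
    rTensor M (B.mulRight x) B.cop = lTensor M (signAction 𝒜 k) (B.lam x) := by
  have hcop : B.cop ∈ tgrade 𝒜 B.dl := by simpa [hdm] using B.cop_mem_tgrade
  rw [mulRight_eq_mulLeft_comp_signAction hdm hcomm hx, LinearMap.rTensor_comp,
    LinearMap.comp_apply, rTensor_signAction_of_mem_tgrade k hcop, map_zsmul,
    ← LinearMap.comp_apply (rTensor _ _), LinearMap.rTensor_comp_lTensor,
    ← LinearMap.lTensor_comp_rTensor, LinearMap.comp_apply, rTensor_mulLeft_cop hdm hx,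
    map_zsmul, mul_comm, ksign_smul_smul]

lemma mulRight_contrRight_cop (hdm : B.dm = 0) (hcomm : B.mu ∘ₗ twist 𝒜 = ksign B.dm • B.mu)
    {d : ℤ} {f : M →ₗ[R] R} (hf : IsHomogFun 𝒜 d f) {k : ℤ} {x : M} (hx : x ∈ 𝒜 k) :
    B.mulRight x (contrRight f B.cop) = ksign (k * d) • contrRight f (B.lam x) := by
  rw [map_contrRight, rTensor_mulRight_cop hdm hcomm hx, contrRight_lTensor_signAction hf]

end BiunitalCoFrob

section OpenClosed

variable {R : Type} [CommRing R] {C A : Type} [AddCommGroup C] [Module R C]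
  [AddCommGroup A] [Module R A] {𝒜 : ℤ → Submodule R C} [DirectSum.Decomposition 𝒜]
  {ℬ : ℤ → Submodule R A} [DirectSum.Decomposition ℬ]
  {BC : BiunitalCoFrob R 𝒜} {BA : BiunitalCoFrob R ℬ} {zip : C →ₗ[R] A} {cozip : A →ₗ[R] C}

theorem rTensor_zip_cop (hzip_homog : ∀ i : ℤ, ∀ x ∈ 𝒜 i, zip x ∈ ℬ i)
    (hcozip_homog : ∀ i : ℤ, ∀ x ∈ ℬ i, cozip x ∈ 𝒜 (i + (BC.dl - BA.dl)))
    (hdual : lTensor C zip BC.cop = rTensor A cozip BA.cop) :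
    rTensor C zip BC.cop =
      ksign (BC.dl + BA.dl) • TensorProduct.map (signAction ℬ (BC.dl - BA.dl)) cozip BA.cop :=
  calc rTensor C zip BC.cop
      = ksign BC.dl • rTensor C zip (twist 𝒜 BC.cop) := by
        rw [BC.cop_symm, map_zsmul, ksign_smul_smul]
    _ = ksign BC.dl • koszulComm 𝒜 ℬ (rTensor A cozip BA.cop) := by
        rw [← hdual, koszulComm_lTensor hzip_homog]
    _ = ksign (BC.dl + BA.dl) •
          TensorProduct.map (signAction ℬ (BC.dl - BA.dl)) cozip BA.cop := by
        rw [koszulComm_rTensor hcozip_homog, BA.cop_symm, map_zsmul, smul_smul, ← ksign_add]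

lemma cozip_eq_contrRight_cop (hdmA : BA.dm = 0)
    (hdual : lTensor C zip BC.cop = rTensor A cozip BA.cop) {α : ℤ} {a : A} (ha : a ∈ ℬ α) :
    cozip a = ksign (BA.dl + BA.dl * α) •
      contrRight ((BA.counit ∘ₗ BA.mulRight a) ∘ₗ zip) BC.cop := by
  rw [← contrRight_lTensor, hdual, ← map_contrRight,
    BiunitalCoFrob.contrRight_counit_mulRight_cop hdmA ha, map_zsmul, ksign_smul_smul]

lemma counit_mulRight_mu_zip (hdmC : BC.dm = 0) (hdmA : BA.dm = 0)
    (hcommC : BC.mu ∘ₗ twist 𝒜 = ksign BC.dm • BC.mu)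
    (hzip_homog : ∀ i : ℤ, ∀ x ∈ 𝒜 i, zip x ∈ ℬ i)
    (hzip_mul : BA.mu ∘ₗ TensorProduct.map zip zip = zip ∘ₗ BC.mu)
    (hcenter : BA.mu ∘ₗ rTensor A zip = BA.mu ∘ₗ twist ℬ ∘ₗ rTensor A zip)
    {α k : ℤ} {a : A} {x : C} (ha : a ∈ ℬ α) (hx : x ∈ 𝒜 k) :
    (BA.counit ∘ₗ BA.mulRight (BA.mu (a ⊗ₜ zip x))) ∘ₗ zip =
      ksign (k * α) • ((BA.counit ∘ₗ BA.mulRight a) ∘ₗ zip) ∘ₗ BC.mulRight x := by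
  have hcentral {i : ℤ} {y : A} (hy : y ∈ ℬ i) :
      BA.mu (y ⊗ₜ zip x) = ksign (k * i) • BA.mu (zip x ⊗ₜ y) := by
    have h := LinearMap.congr_fun hcenter (x ⊗ₜ y)
    simp only [LinearMap.comp_apply, rTensor_tmul, twist_tmul (hzip_homog k x hx) hy,
      map_zsmul] at h
    rw [h, ksign_smul_smul]
  have hzip_mu (y z : C) : BA.mu (zip y ⊗ₜ zip z) = zip (BC.mu (y ⊗ₜ z)) :=
    LinearMap.congr_fun hzip_mul (y ⊗ₜ z)
  refine ext_homog (𝒜 := 𝒜) fun j b hb => ?_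
  simp only [LinearMap.comp_apply, LinearMap.smul_apply, BiunitalCoFrob.mulRight_apply]
  calc BA.counit (BA.mu (zip b ⊗ₜ BA.mu (a ⊗ₜ zip x)))
      = ksign (k * (j + α)) • BA.counit (BA.mu (BA.mu (zip x ⊗ₜ zip b) ⊗ₜ a)) := by
        rw [← BiunitalCoFrob.mu_mu_tmul hdmA,
          hcentral (BiunitalCoFrob.mu_mem hdmA (hzip_homog j b hb) ha), map_zsmul,
          BiunitalCoFrob.mu_mu_tmul hdmA]
    _ = ksign (k * α) • BA.counit (BA.mu (zip (BC.mu (b ⊗ₜ x)) ⊗ₜ a)) := by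
        rw [hzip_mu, BiunitalCoFrob.mu_tmul_comm hdmC hcommC hx hb, map_zsmul,
          ← TensorProduct.smul_tmul', map_zsmul, map_zsmul, smul_smul, ← ksign_add]
        exact congrArg (· • _) (ksign_congr ⟨k * j, by ring⟩)

theorem mu_rTensor_cozip (hdmC : BC.dm = 0) (hdmA : BA.dm = 0)
    (hcommC : BC.mu ∘ₗ twist 𝒜 = ksign BC.dm • BC.mu)
    (hzip_homog : ∀ i : ℤ, ∀ x ∈ 𝒜 i, zip x ∈ ℬ i)
    (hzip_mul : BA.mu ∘ₗ TensorProduct.map zip zip = zip ∘ₗ BC.mu)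
    (hcenter : BA.mu ∘ₗ rTensor A zip = BA.mu ∘ₗ twist ℬ ∘ₗ rTensor A zip)
    (hdual : lTensor C zip BC.cop = rTensor A cozip BA.cop) :
    BC.mu ∘ₗ rTensor C cozip = cozip ∘ₗ BA.mu ∘ₗ lTensor A zip := by
  refine tensor_ext_homog (𝒜 := ℬ) (ℬ := 𝒜) fun α k a x ha hx => ?_
  set g := (BA.counit ∘ₗ BA.mulRight a) ∘ₗ zip
  have hg : IsHomogFun 𝒜 (α - BA.dl) g :=
    (BiunitalCoFrob.isHomogFun_counit_mulRight hdmA ha).comp hzip_homog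
  have lhs : BC.mu (cozip a ⊗ₜ x) =
      ksign (BA.dl + BA.dl * α + k * (α - BA.dl)) • contrRight g (BC.lam x) := by
    rw [← BiunitalCoFrob.mulRight_apply, cozip_eq_contrRight_cop hdmA hdual ha, map_zsmul,
      BiunitalCoFrob.mulRight_contrRight_cop hdmC hcommC hg hx, smul_smul, ← ksign_add]
  have rhs : cozip (BA.mu (a ⊗ₜ zip x)) =
      ksign (BA.dl + BA.dl * (α + k) + k * α) • contrRight g (BC.lam x) := by
    rw [cozip_eq_contrRight_cop hdmA hdual
        (BiunitalCoFrob.mu_mem hdmA ha (hzip_homog k x hx)),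
      counit_mulRight_mu_zip hdmC hdmA hcommC hzip_homog hzip_mul hcenter ha hx,
      contrRight_smul, ← contrRight_lTensor, ← BiunitalCoFrob.lam_eq_lTensor_mulRight_cop hdmC,
      smul_smul, ← ksign_add]
  simp only [LinearMap.comp_apply, rTensor_tmul, lTensor_tmul]
  rw [lhs, rhs]
  exact congrArg (· • _) (ksign_congr ⟨-(k * BA.dl), by ring⟩)

end OpenClosed

theorem tqft_additional_relations_general {R : Type} [CommRing R]
    {C : Type} [AddCommGroup C] [Module R C]
    {A : Type} [AddCommGroup A] [Module R A]
    (𝒜 : ℤ → Submodule R C) [DirectSum.Decomposition 𝒜]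
    (ℬ : ℤ → Submodule R A) [DirectSum.Decomposition ℬ]
    (BC : BiunitalCoFrob R 𝒜) (BA : BiunitalCoFrob R ℬ)
    (hdmC : BC.dm = 0) (hdmA : BA.dm = 0)
    -- (1) the closed sector is commutative and cocommutative
    (hcommC : BC.mu.comp (twist 𝒜) = ksign BC.dm • BC.mu)
    (zip : C →ₗ[R] A) (cozip : A →ₗ[R] C)
    (hzip_homog : ∀ i : ℤ, ∀ x ∈ 𝒜 i, zip x ∈ ℬ i)
    (hcozip_homog : ∀ i : ℤ, ∀ x ∈ ℬ i, cozip x ∈ 𝒜 (i + (BC.dl - BA.dl)))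
    -- (3) the zipper is an algebra homomorphism
    (hzip_mul : BA.mu.comp (TensorProduct.map zip zip) = zip.comp BC.mu)
    -- (4) the zipper lands in the center of μ_A
    (hcenter : BA.mu.comp (LinearMap.rTensor A zip) =
      BA.mu.comp ((twist ℬ).comp (LinearMap.rTensor A zip)))
    -- (5) the cozipper is dual to the zipper
    (hdual : LinearMap.lTensor C zip BC.cop = LinearMap.rTensor A cozip BA.cop) :
    -- (a) (ζ⊗1)c_C = (-1)^{|λ_C|+|λ_A|}(1⊗ζ*)c_A
    (LinearMap.rTensor C zip BC.cop =
      ksign (BC.dl + BA.dl) •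
        ((TensorProduct.map (signAction ℬ (BC.dl - BA.dl)) cozip) BA.cop)) ∧
    -- (b) μ_C(ζ*⊗1) = ζ*μ_A(1⊗ζ)
    (BC.mu.comp (LinearMap.rTensor C cozip) =
      cozip.comp (BA.mu.comp (LinearMap.lTensor A zip))) :=
  ⟨rTensor_zip_cop hzip_homog hcozip_homog hdual,
    mu_rTensor_cozip hdmC hdmA hcommC hzip_homog hzip_mul hcenter hdual⟩

/-- In a graded 2D open-closed TQFT (relations (1)–(5): commutative and
cocommutative biunital coFrobenius closed sector `C`, biunital coFrobenius open sector
`A`, products of degree `0`, zipper `ζ : C → A` an algebra map of degree `0` landing in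
the center of `μ_A`, cozipper `ζ* : A → C` of degree `|λ_C|-|λ_A|` with
`(1⊗ζ)c_C = (ζ*⊗1)c_A`), the additional relations hold:
(a) `(ζ⊗1)c_C = (-1)^{|λ_C|+|λ_A|}(1⊗ζ*)c_A`, and
(b) `μ_C(ζ*⊗1) = ζ*μ_A(1⊗ζ)`, i.e. the cozipper intertwines the right `C`-module
structures, `A` being a `C`-module via `ζ`. -/
theorem tqft_additional_relations {R : Type} [CommRing R]
    {C : Type} [AddCommGroup C] [Module R C] [Module.Free R C] [Module.Finite R C]
    {A : Type} [AddCommGroup A] [Module R A] [Module.Free R A] [Module.Finite R A]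
    (𝒜 : ℤ → Submodule R C) [DirectSum.Decomposition 𝒜]
    (ℬ : ℤ → Submodule R A) [DirectSum.Decomposition ℬ]
    (BC : BiunitalCoFrob R 𝒜) (BA : BiunitalCoFrob R ℬ)
    (hdmC : BC.dm = 0) (hdmA : BA.dm = 0)
    -- (1) the closed sector is commutative and cocommutative
    (hcommC : BC.mu.comp (twist 𝒜) = ksign BC.dm • BC.mu)
    (hcocommC : (twist 𝒜).comp BC.lam = ksign BC.dl • BC.lam)
    (zip : C →ₗ[R] A) (cozip : A →ₗ[R] C)
    (hzip_homog : ∀ i : ℤ, ∀ x ∈ 𝒜 i, zip x ∈ ℬ i)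
    (hcozip_homog : ∀ i : ℤ, ∀ x ∈ ℬ i, cozip x ∈ 𝒜 (i + (BC.dl - BA.dl)))
    -- (3) the zipper is an algebra homomorphism
    (hzip_mul : BA.mu.comp (TensorProduct.map zip zip) = zip.comp BC.mu)
    (hzip_unit : zip BC.unit = BA.unit)
    -- (4) the zipper lands in the center of μ_A
    (hcenter : BA.mu.comp (LinearMap.rTensor A zip) =
      BA.mu.comp ((twist ℬ).comp (LinearMap.rTensor A zip)))
    -- (5) the cozipper is dual to the zipper
    (hdual : LinearMap.lTensor C zip BC.cop = LinearMap.rTensor A cozip BA.cop) :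
    -- (a) (ζ⊗1)c_C = (-1)^{|λ_C|+|λ_A|}(1⊗ζ*)c_A
    (LinearMap.rTensor C zip BC.cop =
      ksign (BC.dl + BA.dl) •
        ((TensorProduct.map (signAction ℬ (BC.dl - BA.dl)) cozip) BA.cop)) ∧
    -- (b) μ_C(ζ*⊗1) = ζ*μ_A(1⊗ζ)
    (BC.mu.comp (LinearMap.rTensor C cozip) =
      cozip.comp (BA.mu.comp (LinearMap.lTensor A zip))) :=
  tqft_additional_relations_general 𝒜 ℬ BC BA hdmC hdmA hcommC zip cozip hzip_homog hcozip_homog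
    hzip_mul hcenter hdual

end GradedCoFrob
end

section
/- Let n ≥ 3 be odd and let A = R[U]/(no relation) ⊗ Λ[A'] be the exterior algebra Λ[A', U] (|U| = n-1 even, |A'| = -n odd, A'² = 0) modeling the loop homology of S^n, with commutative product μ given by multiplication, unit η = 1, and coproduct λ defined by λ(A'U^k) = Σ_{i+j=k-1, i,j≥0} A'U^i ⊗ A'U^j and λ(U^k) = Σ_{i+j=k-1, i,j≥0} (A'U^i ⊗ U^j - U^i ⊗ A'U^j). Then λη = 0, λ is (skew-)coassociative of odd degree 1-2n, and Sullivan's relation holds: λμ = (1⊗μ)(λ⊗1) + (μ⊗1)(1⊗λ). -/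
/-!
Everything is checked on basis elements. Coassociativity is a reindexing of double sums: both
iterates of `λ` on `A'U^k` or `U^k` run over the decompositions `a + c + d = k - 2`. Sullivan's
relation on `x U^k ⊗ y U^l` splits the `k + l` terms of `λ(x y U^{k+l})` into the first `k`,
which form `(1 ⊗ μ)(λ ⊗ 1)`, and the last `l`, which form `(μ ⊗ 1)(1 ⊗ λ)`.
-/

open TensorProduct LinearMap
open scoped TensorProduct

namespace SphereLoop

/-- The degree of the basis monomial `A'^s U^k` of `Λ[A',U]` for the sphere `S^n`:
`|U| = n-1`, `|A'| = -n`. -/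
def deg (n : ℤ) (p : Bool × ℕ) : ℤ := (n - 1) * (p.2 : ℤ) - n * (if p.1 then 1 else 0)

open Finset

theorem sum_range_sum_range_tsub_assoc {M : Type*} [AddCommMonoid M] (k : ℕ)
    (G : ℕ → ℕ → ℕ → M) :
    ∑ i ∈ range k, ∑ j ∈ range i, G j (i - 1 - j) (k - 1 - i) =
      ∑ i ∈ range k, ∑ j ∈ range (k - 1 - i), G i j (k - 1 - i - 1 - j) := by
  cases k with
  | zero => rfl
  | succ m =>
    rw [sum_range_succ', sum_range_succ, range_zero, sum_empty, add_zero, Nat.add_sub_cancel,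
      Nat.sub_self, Nat.zero_sub, range_zero, sum_empty, add_zero]
    refine Eq.trans (sum_congr rfl fun i _ => sum_congr rfl fun j hj => ?_)
      ((sum_range_diag_flip m fun a c => G a c (m - 1 - a - c)).trans
        (sum_congr rfl fun i _ => sum_congr rfl fun j _ => ?_))
    · have := mem_range.mp hj
      rw [Nat.add_sub_cancel, show m - (i + 1) = m - 1 - j - (i - j) by omega]
    · congr 1; omega

theorem sum_range_add_tsub {M : Type*} [AddCommMonoid M] (k l : ℕ) (f : ℕ → ℕ → M) :
    ∑ i ∈ range (k + l), f i (k + l - 1 - i) =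
      ∑ i ∈ range k, f i (k - 1 - i + l) + ∑ j ∈ range l, f (k + j) (l - 1 - j) := by
  rw [sum_range_add]
  congr 1
  · refine sum_congr rfl fun i hi => ?_
    have := mem_range.mp hi
    congr 1; omega
  · refine sum_congr rfl fun j _ => ?_
    congr 1; omega

theorem deg_add_deg {n : ℤ} {s t u : Bool} {i j k : ℕ} (hk : i + j + 1 = k)
    (hst : s.toNat + t.toNat = u.toNat + 1) :
    deg n (s, i) + deg n (t, j) = deg n (u, k) + (1 - 2 * n) := by
  subst hk
  cases s <;> cases t <;> cases u <;> simp [deg] at hst ⊢ <;> ring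

section Coproduct

variable {R A : Type*} [CommRing R] [AddCommGroup A] [Module R A]
  (b : Module.Basis (Bool × ℕ) R A)

def homogeneousTensors (n d : ℤ) : Submodule R (A ⊗[R] A) :=
  Submodule.span R {t | ∃ q r : Bool × ℕ, deg n q + deg n r = d ∧ t = b q ⊗ₜ[R] b r}

theorem tmul_mem_homogeneousTensors {n d : ℤ} {q r : Bool × ℕ} (h : deg n q + deg n r = d) :
    b q ⊗ₜ[R] b r ∈ homogeneousTensors b n d :=
  Submodule.subset_span ⟨q, r, h, rfl⟩

variable {b} {lam : A →ₗ[R] A ⊗[R] A}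

theorem lam_mem_homogeneousTensors (n : ℤ)
    (hlamA : ∀ k : ℕ, lam (b (true, k)) =
      ∑ i ∈ range k, b (true, i) ⊗ₜ[R] b (true, k - 1 - i))
    (hlamU : ∀ k : ℕ, lam (b (false, k)) =
      ∑ i ∈ range k,
        (b (true, i) ⊗ₜ[R] b (false, k - 1 - i) - b (false, i) ⊗ₜ[R] b (true, k - 1 - i)))
    (p : Bool × ℕ) : lam (b p) ∈ homogeneousTensors b n (deg n p + (1 - 2 * n)) := by
  obtain ⟨_ | _, k⟩ := p
  · rw [hlamU]
    refine sum_mem fun i hi => sub_mem ?_ ?_ <;>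
      exact tmul_mem_homogeneousTensors b (deg_add_deg (by grind) rfl)
  · rw [hlamA]
    exact sum_mem fun i hi => tmul_mem_homogeneousTensors b (deg_add_deg (by grind) rfl)

theorem rTensor_lam_comp_lam {par : A →ₗ[R] A}
    (hlamA : ∀ k : ℕ, lam (b (true, k)) =
      ∑ i ∈ range k, b (true, i) ⊗ₜ[R] b (true, k - 1 - i))
    (hlamU : ∀ k : ℕ, lam (b (false, k)) =
      ∑ i ∈ range k,
        (b (true, i) ⊗ₜ[R] b (false, k - 1 - i) - b (false, i) ⊗ₜ[R] b (true, k - 1 - i)))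
    (hpar : ∀ p : Bool × ℕ, par (b p) = if p.1 then -b p else b p) :
    (rTensor A lam).comp lam =
      -((TensorProduct.assoc R A A A).symm.toLinearMap.comp ((map par lam).comp lam)) := by
  refine b.ext fun p => ?_
  obtain ⟨_ | _, k⟩ := p
  all_goals
    simp only [comp_apply, LinearMap.neg_apply, LinearEquiv.coe_coe, hlamA, hlamU, hpar,
      reduceIte, Bool.false_eq_true, map_sum, map_sub, map_neg, neg_neg, rTensor_tmul, map_tmul,
      sum_tmul, tmul_sum, tmul_sub, sub_tmul, neg_tmul, assoc_symm_tmul, ← sum_sub_distrib,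
      ← sum_neg_distrib]
  · convert sum_range_sum_range_tsub_assoc k fun a c d =>
      (b (true, a) ⊗ₜ[R] b (true, c)) ⊗ₜ[R] b (false, d)
        - (b (true, a) ⊗ₜ[R] b (false, c)) ⊗ₜ[R] b (true, d)
        + (b (false, a) ⊗ₜ[R] b (true, c)) ⊗ₜ[R] b (true, d) using 1 <;>
    exact sum_congr rfl fun _ _ => sum_congr rfl fun _ _ => by abel
  · exact sum_range_sum_range_tsub_assoc k fun a c d =>
      (b (true, a) ⊗ₜ[R] b (true, c)) ⊗ₜ[R] b (true, d)

theorem lam_comp_mu {mu : A ⊗[R] A →ₗ[R] A} {par : A →ₗ[R] A}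
    (hmu : ∀ p q : Bool × ℕ, mu (b p ⊗ₜ[R] b q) =
      if p.1 && q.1 then 0 else b (p.1 || q.1, p.2 + q.2))
    (hlamA : ∀ k : ℕ, lam (b (true, k)) =
      ∑ i ∈ range k, b (true, i) ⊗ₜ[R] b (true, k - 1 - i))
    (hlamU : ∀ k : ℕ, lam (b (false, k)) =
      ∑ i ∈ range k,
        (b (true, i) ⊗ₜ[R] b (false, k - 1 - i) - b (false, i) ⊗ₜ[R] b (true, k - 1 - i)))
    (hpar : ∀ p : Bool × ℕ, par (b p) = if p.1 then -b p else b p) :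
    lam.comp mu =
      (map LinearMap.id mu).comp ((TensorProduct.assoc R A A A).toLinearMap.comp (rTensor A lam))
      + (rTensor A mu).comp ((TensorProduct.assoc R A A A).symm.toLinearMap.comp (map par lam)) := by
  refine (b.tensorProduct b).ext fun ⟨⟨s, k⟩, ⟨t, l⟩⟩ => ?_
  rw [Module.Basis.tensorProduct_apply]
  cases s <;> cases t <;>
    simp only [comp_apply, LinearMap.add_apply, LinearEquiv.coe_coe, hmu, hlamA, hlamU, hpar,
      Bool.and_self, Bool.and_true, Bool.and_false, Bool.or_self, Bool.or_true, Bool.true_or,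
      Bool.false_eq_true, if_false, if_true, map_sum, map_sub, map_neg, map_zero, rTensor_tmul,
      map_tmul, id_coe, id_eq, sum_tmul, tmul_sum, tmul_sub, sub_tmul, neg_tmul, tmul_zero,
      zero_tmul, assoc_tmul, assoc_symm_tmul, sum_neg_distrib, neg_neg, sum_const_zero, add_zero,
      neg_zero, sub_zero, zero_sub]
  · exact sum_range_add_tsub k l fun i j =>
      b (true, i) ⊗ₜ[R] b (false, j) - b (false, i) ⊗ₜ[R] b (true, j)
  all_goals exact sum_range_add_tsub k l fun i j => b (true, i) ⊗ₜ[R] b (true, j)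

end Coproduct

theorem sphere_loop_bialgebra_general {R : Type} [CommRing R] {A : Type} [AddCommGroup A]
    [Module R A] (n : ℤ)
    (b : Module.Basis (Bool × ℕ) R A)
    (mu : A ⊗[R] A →ₗ[R] A) (lam : A →ₗ[R] A ⊗[R] A) (par : A →ₗ[R] A)
    -- the product of basis monomials: `A'^s U^k · A'^t U^l`
    (hmu : ∀ p q : Bool × ℕ, mu (b p ⊗ₜ[R] b q) =
      if p.1 && q.1 then 0 else b (p.1 || q.1, p.2 + q.2))
    -- the coproduct on basis monomials
    (hlamA : ∀ k : ℕ, lam (b (true, k)) =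
      ∑ i ∈ Finset.range k, b (true, i) ⊗ₜ[R] b (true, k - 1 - i))
    (hlamU : ∀ k : ℕ, lam (b (false, k)) =
      ∑ i ∈ Finset.range k,
        (b (true, i) ⊗ₜ[R] b (false, k - 1 - i) - b (false, i) ⊗ₜ[R] b (true, k - 1 - i)))
    -- the parity operator `x ↦ (-1)^{|x|} x`; since `n` is odd, `deg n p` is odd iff `p.1`
    (hpar : ∀ p : Bool × ℕ, par (b p) = if p.1 then -b p else b p) :
    -- λη = 0
    (lam (b (false, 0)) = 0) ∧
    -- λ is homogeneous of degree 1 - 2n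
    (∀ p : Bool × ℕ, lam (b p) ∈ Submodule.span R
      {t : A ⊗[R] A | ∃ q r : Bool × ℕ,
        deg n q + deg n r = deg n p + (1 - 2 * n) ∧ t = b q ⊗ₜ[R] b r}) ∧
    -- skew-coassociativity: (λ⊗1)λ = -(1⊗λ)λ
    ((LinearMap.rTensor A lam).comp lam =
      -((TensorProduct.assoc R A A A).symm.toLinearMap.comp
        ((TensorProduct.map par lam).comp lam))) ∧
    -- Sullivan's relation: λμ = (1⊗μ)(λ⊗1) + (μ⊗1)(1⊗λ)
    (lam.comp mu =
      (TensorProduct.map LinearMap.id mu).comp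
        ((TensorProduct.assoc R A A A).toLinearMap.comp (LinearMap.rTensor A lam))
      + (LinearMap.rTensor A mu).comp
        ((TensorProduct.assoc R A A A).symm.toLinearMap.comp
          (TensorProduct.map par lam))) :=
  ⟨by rw [hlamU, Finset.sum_range_zero], lam_mem_homogeneousTensors n hlamA hlamU,
    rTensor_lam_comp_lam hlamA hlamU hpar, lam_comp_mu hmu hlamA hlamU hpar⟩

/-- Let `n ≥ 3` be odd and let `A = Λ[A',U]` be the free module with basis
`{A'^s U^k}` (`|U| = n-1` even, `|A'| = -n` odd, `A'² = 0`), modeling the loop homology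
of `S^n`, equipped with the graded-commutative product `μ` (basis multiplication, with
`A'² = 0`), unit `η = 1 = A'^0 U^0`, and coproduct
`λ(A'U^k) = Σ_{i+j=k-1, i,j≥0} A'U^i ⊗ A'U^j`,
`λ(U^k) = Σ_{i+j=k-1, i,j≥0} (A'U^i ⊗ U^j - U^i ⊗ A'U^j)`.
Then `λη = 0`, `λ` is homogeneous of odd degree `1-2n` and skew-coassociative
(`(λ⊗1)λ = -(1⊗λ)λ`, the Koszul sign of `1⊗λ` being implemented by the parity operator
`par`, which on a monomial of degree `d` is multiplication by `(-1)^d`), and Sullivan's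
relation `λμ = (1⊗μ)(λ⊗1) + (μ⊗1)(1⊗λ)` holds. -/
theorem sphere_loop_bialgebra {R : Type} [CommRing R] {A : Type} [AddCommGroup A]
    [Module R A] (n : ℤ) (hodd : Odd n) (hn : 3 ≤ n)
    (b : Module.Basis (Bool × ℕ) R A)
    (mu : A ⊗[R] A →ₗ[R] A) (lam : A →ₗ[R] A ⊗[R] A) (par : A →ₗ[R] A)
    -- the product of basis monomials: `A'^s U^k · A'^t U^l`
    (hmu : ∀ p q : Bool × ℕ, mu (b p ⊗ₜ[R] b q) =
      if p.1 && q.1 then 0 else b (p.1 || q.1, p.2 + q.2))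
    -- the coproduct on basis monomials
    (hlamA : ∀ k : ℕ, lam (b (true, k)) =
      ∑ i ∈ Finset.range k, b (true, i) ⊗ₜ[R] b (true, k - 1 - i))
    (hlamU : ∀ k : ℕ, lam (b (false, k)) =
      ∑ i ∈ Finset.range k,
        (b (true, i) ⊗ₜ[R] b (false, k - 1 - i) - b (false, i) ⊗ₜ[R] b (true, k - 1 - i)))
    -- the parity operator `x ↦ (-1)^{|x|} x`; since `n` is odd, `deg n p` is odd iff `p.1`
    (hpar : ∀ p : Bool × ℕ, par (b p) = if p.1 then -b p else b p) :
    -- λη = 0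
    (lam (b (false, 0)) = 0) ∧
    -- λ is homogeneous of degree 1 - 2n
    (∀ p : Bool × ℕ, lam (b p) ∈ Submodule.span R
      {t : A ⊗[R] A | ∃ q r : Bool × ℕ,
        deg n q + deg n r = deg n p + (1 - 2 * n) ∧ t = b q ⊗ₜ[R] b r}) ∧
    -- skew-coassociativity: (λ⊗1)λ = -(1⊗λ)λ
    ((LinearMap.rTensor A lam).comp lam =
      -((TensorProduct.assoc R A A A).symm.toLinearMap.comp
        ((TensorProduct.map par lam).comp lam))) ∧
    -- Sullivan's relation: λμ = (1⊗μ)(λ⊗1) + (μ⊗1)(1⊗λ)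
    (lam.comp mu =
      (TensorProduct.map LinearMap.id mu).comp
        ((TensorProduct.assoc R A A A).toLinearMap.comp (LinearMap.rTensor A lam))
      + (LinearMap.rTensor A mu).comp
        ((TensorProduct.assoc R A A A).symm.toLinearMap.comp
          (TensorProduct.map par lam))) :=
  sphere_loop_bialgebra_general n b mu lam par hmu hlamA hlamU hpar

end SphereLoop
end

section
/- Let A = R[U, U⁻¹] be the Laurent polynomial ring in degree 0 (modeling H_*ΩS¹) with product μ the usual multiplication, unit η = 1, and coproduct λ₊ defined by λ₊(U^k) = Σ_{i=0}^{k} U^i⊗U^{k-i} for k ≥ 0 and λ₊(U^k) = -Σ_{i=k+1}^{-1} U^i⊗U^{k-i} for k < 0. Then λ₊ is coassociative, cocommutative, satisfies λ₊(1) = 1⊗1, and the Loday–Ronco unital infinitesimal relation holds: λ₊(ab) = (1⊗μ)(λ₊(a)⊗b) + (μ⊗1)(a⊗λ₊(b)) - a⊗b for all monomials a, b. -/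
open TensorProduct LinearMap
open scoped TensorProduct

namespace CircleLoop

variable {R : Type} [CommRing R] {A : Type} [AddCommGroup A] [Module R A]


variable {R : Type} [CommRing R]

lemma sum_if_pin_add (n : ℕ) (a j : ℤ) (F : ℤ → R) :
    (∑ t ∈ Finset.range n, if a + (t : ℤ) = j then F (t : ℤ) else 0)
      = if a ≤ j ∧ j < a + n then F (j - a) else 0 := by
  induction n with
  | zero => simp only [Finset.range_zero, Finset.sum_empty]; rw [if_neg]; omega
  | succ n ih =>
    rw [Finset.sum_range_succ, ih]
    by_cases h : a + (n : ℤ) = j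
    · rw [if_neg (by omega), if_pos h, if_pos (by omega), zero_add]
      congr 1; omega
    · rw [if_neg h, add_zero]
      by_cases h2 : a ≤ j ∧ j < a + n
      · rw [if_pos h2, if_pos (by omega)]
      · rw [if_neg h2, if_neg (by omega)]

lemma sum_if_pin_sub (n : ℕ) (a j : ℤ) (F : ℤ → R) :
    (∑ t ∈ Finset.range n, if a - (t : ℤ) = j then F (t : ℤ) else 0)
      = if a - n < j ∧ j ≤ a then F (a - j) else 0 := by
  induction n with
  | zero => simp only [Finset.range_zero, Finset.sum_empty]; rw [if_neg]; omega
  | succ n ih =>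
    rw [Finset.sum_range_succ, ih]
    by_cases h : a - (n : ℤ) = j
    · rw [if_neg (by omega), if_pos h, if_pos (by omega), zero_add]
      congr 1; omega
    · rw [if_neg h, add_zero]
      by_cases h2 : a - n < j ∧ j ≤ a
      · rw [if_pos h2, if_pos (by omega)]
      · rw [if_neg h2, if_neg (by omega)]

variable {A : Type} [AddCommGroup A] [Module R A]

lemma repr_lam (b : Module.Basis ℤ R A) (lam : A →ₗ[R] A ⊗[R] A)
    (hlam_nonneg : ∀ k : ℤ, 0 ≤ k →
      lam (b k) = ∑ i ∈ Finset.range (k.toNat + 1), b (i : ℤ) ⊗ₜ[R] b (k - (i : ℤ)))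
    (hlam_neg : ∀ k : ℤ, k < 0 →
      lam (b k) = -∑ i ∈ Finset.range (-(k + 1)).toNat,
        b (k + 1 + (i : ℤ)) ⊗ₜ[R] b (-1 - (i : ℤ)))
    (k i j : ℤ) :
    ((b.tensorProduct b).repr (lam (b k))) (i, j)
      = if i + j = k then ((if 0 ≤ i then 1 else 0) - (if k < i then (1 : R) else 0)) else 0 := by
  rcases le_or_gt 0 k with hk | hk
  · rw [hlam_nonneg k hk, map_sum, Finsupp.coe_finset_sum, Finset.sum_apply]
    have h1 : ∀ t ∈ Finset.range (k.toNat + 1),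
        ((b.tensorProduct b).repr (b (t : ℤ) ⊗ₜ[R] b (k - (t : ℤ)))) (i, j)
          = if (0 : ℤ) + (t : ℤ) = i then
              (if k - (t : ℤ) = j then (1 : R) else 0) else 0 := by
      intro t _
      rw [Module.Basis.tensorProduct_repr_tmul_apply, Module.Basis.repr_self, Module.Basis.repr_self,
        Finsupp.single_apply, Finsupp.single_apply]
      simp only [smul_eq_mul]
      split_ifs <;> first | (exfalso; omega) | ring1
    rw [Finset.sum_congr rfl h1,
      sum_if_pin_add _ _ _ (fun x => if k - x = j then (1:R) else 0)]
    split_ifs <;> first | (exfalso; omega) | norm_num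
  · rw [hlam_neg k hk, map_neg, Finsupp.coe_neg, Pi.neg_apply, map_sum,
      Finsupp.coe_finset_sum, Finset.sum_apply]
    have h1 : ∀ t ∈ Finset.range (-(k + 1)).toNat,
        ((b.tensorProduct b).repr (b (k + 1 + (t : ℤ)) ⊗ₜ[R] b (-1 - (t : ℤ)))) (i, j)
          = if (k + 1) + (t : ℤ) = i then
              (if (-1 : ℤ) - (t : ℤ) = j then (1 : R) else 0) else 0 := by
      intro t _
      rw [Module.Basis.tensorProduct_repr_tmul_apply, Module.Basis.repr_self, Module.Basis.repr_self,
        Finsupp.single_apply, Finsupp.single_apply]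
      simp only [smul_eq_mul]
      split_ifs <;> first | (exfalso; omega) | ring1
    rw [Finset.sum_congr rfl h1,
      sum_if_pin_add _ _ _ (fun x => if (-1:ℤ) - x = j then (1:R) else 0)]
    split_ifs <;> first | (exfalso; omega) | norm_num

lemma repr_assoc_symm (b : Module.Basis ℤ R A) (x : ℤ) (z : A ⊗[R] A) (i j r : ℤ) :
    (((b.tensorProduct b).tensorProduct b).repr
        ((TensorProduct.assoc R A A A).symm (b x ⊗ₜ[R] z)) ((i, j), r))
      = (if x = i then (1:R) else 0) * ((b.tensorProduct b).repr z (j, r)) := by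
  induction z using TensorProduct.induction_on with
  | zero => simp
  | tmul u v =>
    rw [TensorProduct.assoc_symm_tmul]
    rw [Module.Basis.tensorProduct_repr_tmul_apply, Module.Basis.tensorProduct_repr_tmul_apply,
      Module.Basis.tensorProduct_repr_tmul_apply, Module.Basis.repr_self, Finsupp.single_apply]
    simp only [smul_eq_mul]
    ring
  | add z1 z2 ih1 ih2 =>
    rw [TensorProduct.tmul_add, map_add, map_add, Finsupp.add_apply, ih1, ih2, map_add,
      Finsupp.add_apply, mul_add]


lemma coassoc (b : Module.Basis ℤ R A) (lam : A →ₗ[R] A ⊗[R] A)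
    (hlam_nonneg : ∀ k : ℤ, 0 ≤ k →
      lam (b k) = ∑ i ∈ Finset.range (k.toNat + 1), b (i : ℤ) ⊗ₜ[R] b (k - (i : ℤ)))
    (hlam_neg : ∀ k : ℤ, k < 0 →
      lam (b k) = -∑ i ∈ Finset.range (-(k + 1)).toNat,
        b (k + 1 + (i : ℤ)) ⊗ₜ[R] b (-1 - (i : ℤ))) :
    ((LinearMap.rTensor A lam).comp lam =
      (TensorProduct.assoc R A A A).symm.toLinearMap.comp
        ((TensorProduct.map LinearMap.id lam).comp lam)) := by
  refine Module.Basis.ext b fun k => ?_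
  simp only [coe_comp, Function.comp_apply, LinearEquiv.coe_coe]
  apply (((b.tensorProduct b).tensorProduct b).repr).injective
  ext p
  obtain ⟨⟨i, j⟩, r⟩ := p
  rcases le_or_gt 0 k with hk | hk
  · rw [hlam_nonneg k hk]
    simp only [map_sum, Finsupp.coe_finset_sum, Finset.sum_apply]
    have hL : ∀ t ∈ Finset.range (k.toNat + 1),
        ((((b.tensorProduct b).tensorProduct b).repr
            ((LinearMap.rTensor A lam) (b (t : ℤ) ⊗ₜ[R] b (k - (t : ℤ))))) ((i, j), r))
          = if k - (t : ℤ) = r then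
              (if i + j = (t : ℤ) then
                ((if 0 ≤ i then 1 else 0) - (if (t : ℤ) < i then (1 : R) else 0)) else 0)
            else 0 := by
      intro t _
      rw [rTensor_tmul, Module.Basis.tensorProduct_repr_tmul_apply,
        repr_lam b lam hlam_nonneg hlam_neg (t : ℤ) i j, Module.Basis.repr_self,
        Finsupp.single_apply]
      simp only [smul_eq_mul]
      split_ifs <;> first | (exfalso; omega) | ring1
    have hR : ∀ t ∈ Finset.range (k.toNat + 1),
        ((((b.tensorProduct b).tensorProduct b).repr
            ((TensorProduct.assoc R A A A).symm
              ((TensorProduct.map LinearMap.id lam) (b (t : ℤ) ⊗ₜ[R] b (k - (t : ℤ)))))) ((i, j), r))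
          = if (0 : ℤ) + (t : ℤ) = i then
              (if j + r = k - (t : ℤ) then
                ((if 0 ≤ j then 1 else 0) - (if k - (t : ℤ) < j then (1 : R) else 0)) else 0)
            else 0 := by
      intro t _
      rw [TensorProduct.map_tmul, LinearMap.id_coe, id_eq,
        repr_assoc_symm b (t : ℤ) (lam (b (k - (t : ℤ)))) i j r,
        repr_lam b lam hlam_nonneg hlam_neg (k - (t : ℤ)) j r]
      split_ifs <;> first | (exfalso; omega) | ring1
    rw [Finset.sum_congr rfl hL,
      sum_if_pin_sub _ _ _ (fun w => if i + j = w then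
        ((if 0 ≤ i then 1 else 0) - (if w < i then (1 : R) else 0)) else 0),
      Finset.sum_congr rfl hR,
      sum_if_pin_add _ _ _ (fun w => if j + r = k - w then
        ((if 0 ≤ j then 1 else 0) - (if k - w < j then (1 : R) else 0)) else 0)]
    split_ifs <;> first | (exfalso; omega) | norm_num
  · rw [hlam_neg k hk]
    simp only [map_neg, map_sum, Finsupp.coe_neg, Pi.neg_apply, Finsupp.coe_finset_sum,
      Finset.sum_apply]
    have hL : ∀ t ∈ Finset.range (-(k + 1)).toNat,
        ((((b.tensorProduct b).tensorProduct b).repr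
            ((LinearMap.rTensor A lam) (b (k + 1 + (t : ℤ)) ⊗ₜ[R] b (-1 - (t : ℤ))))) ((i, j), r))
          = if (-1 : ℤ) - (t : ℤ) = r then
              (if i + j = k + 1 + (t : ℤ) then
                ((if 0 ≤ i then 1 else 0) - (if k + 1 + (t : ℤ) < i then (1 : R) else 0)) else 0)
            else 0 := by
      intro t _
      rw [rTensor_tmul, Module.Basis.tensorProduct_repr_tmul_apply,
        repr_lam b lam hlam_nonneg hlam_neg (k + 1 + (t : ℤ)) i j, Module.Basis.repr_self,
        Finsupp.single_apply]
      simp only [smul_eq_mul]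
      split_ifs <;> first | (exfalso; omega) | ring1
    have hR : ∀ t ∈ Finset.range (-(k + 1)).toNat,
        ((((b.tensorProduct b).tensorProduct b).repr
            ((TensorProduct.assoc R A A A).symm
              ((TensorProduct.map LinearMap.id lam)
                (b (k + 1 + (t : ℤ)) ⊗ₜ[R] b (-1 - (t : ℤ)))))) ((i, j), r))
          = if (k + 1) + (t : ℤ) = i then
              (if j + r = -1 - (t : ℤ) then
                ((if 0 ≤ j then 1 else 0) - (if -1 - (t : ℤ) < j then (1 : R) else 0)) else 0)
            else 0 := by
      intro t _
      rw [TensorProduct.map_tmul, LinearMap.id_coe, id_eq,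
        repr_assoc_symm b (k + 1 + (t : ℤ)) (lam (b (-1 - (t : ℤ)))) i j r,
        repr_lam b lam hlam_nonneg hlam_neg (-1 - (t : ℤ)) j r]
      split_ifs <;> first | (exfalso; omega) | ring1
    rw [Finset.sum_congr rfl hL,
      sum_if_pin_sub _ _ _ (fun w => if i + j = k + 1 + w then
        ((if 0 ≤ i then 1 else 0) - (if k + 1 + w < i then (1 : R) else 0)) else 0),
      Finset.sum_congr rfl hR,
      sum_if_pin_add _ _ _ (fun w => if j + r = -1 - w then
        ((if 0 ≤ j then 1 else 0) - (if -1 - w < j then (1 : R) else 0)) else 0)]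
    rw [neg_inj]
    split_ifs <;> first | (exfalso; omega) | norm_num


lemma cocomm (b : Module.Basis ℤ R A) (lam : A →ₗ[R] A ⊗[R] A)
    (hlam_nonneg : ∀ k : ℤ, 0 ≤ k →
      lam (b k) = ∑ i ∈ Finset.range (k.toNat + 1), b (i : ℤ) ⊗ₜ[R] b (k - (i : ℤ)))
    (hlam_neg : ∀ k : ℤ, k < 0 →
      lam (b k) = -∑ i ∈ Finset.range (-(k + 1)).toNat,
        b (k + 1 + (i : ℤ)) ⊗ₜ[R] b (-1 - (i : ℤ))) :
    (TensorProduct.comm R A A).toLinearMap.comp lam = lam := by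
  refine Module.Basis.ext b fun k => ?_
  simp only [coe_comp, Function.comp_apply, LinearEquiv.coe_coe]
  rcases le_or_gt 0 k with hk | hk
  · rw [hlam_nonneg k hk, map_sum]
    simp only [TensorProduct.comm_tmul]
    rw [← Finset.sum_range_reflect]
    refine Finset.sum_congr rfl fun t ht => ?_
    rw [Finset.mem_range] at ht
    have e1 : k - (↑(k.toNat + 1 - 1 - t) : ℤ) = (t : ℤ) := by omega
    have e2 : (↑(k.toNat + 1 - 1 - t) : ℤ) = k - (t : ℤ) := by omega
    rw [e1, e2]
  · rw [hlam_neg k hk, map_neg, map_sum]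
    simp only [TensorProduct.comm_tmul]
    rw [← Finset.sum_range_reflect, neg_inj]
    refine Finset.sum_congr rfl fun t ht => ?_
    rw [Finset.mem_range] at ht
    have e1 : (-1 : ℤ) - (↑((-(k + 1)).toNat - 1 - t) : ℤ) = k + 1 + (t : ℤ) := by omega
    have e2 : k + 1 + (↑((-(k + 1)).toNat - 1 - t) : ℤ) = -1 - (t : ℤ) := by omega
    rw [e1, e2]

set_option maxHeartbeats 2000000 in
lemma infini (b : Module.Basis ℤ R A) (mu : A ⊗[R] A →ₗ[R] A) (lam : A →ₗ[R] A ⊗[R] A)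
    (hmu : ∀ k l : ℤ, mu (b k ⊗ₜ[R] b l) = b (k + l))
    (hlam_nonneg : ∀ k : ℤ, 0 ≤ k →
      lam (b k) = ∑ i ∈ Finset.range (k.toNat + 1), b (i : ℤ) ⊗ₜ[R] b (k - (i : ℤ)))
    (hlam_neg : ∀ k : ℤ, k < 0 →
      lam (b k) = -∑ i ∈ Finset.range (-(k + 1)).toNat,
        b (k + 1 + (i : ℤ)) ⊗ₜ[R] b (-1 - (i : ℤ))) :
    (lam.comp mu =
      (TensorProduct.map LinearMap.id mu).comp
        ((TensorProduct.assoc R A A A).toLinearMap.comp (LinearMap.rTensor A lam))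
      + (LinearMap.rTensor A mu).comp
        ((TensorProduct.assoc R A A A).symm.toLinearMap.comp
          (TensorProduct.map LinearMap.id lam))
      - LinearMap.id) := by
  refine Module.Basis.ext (b.tensorProduct b) fun p => ?_
  obtain ⟨k, l⟩ := p
  rw [Module.Basis.tensorProduct_apply]
  simp only [LinearMap.sub_apply, LinearMap.add_apply, coe_comp, Function.comp_apply, LinearEquiv.coe_coe,
    id_apply, rTensor_tmul, TensorProduct.map_tmul, LinearMap.id_coe, id_eq]
  rw [hmu k l]
  apply ((b.tensorProduct b).repr).injective
  ext p
  obtain ⟨i, j⟩ := p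
  rw [repr_lam b lam hlam_nonneg hlam_neg (k + l) i j, map_sub, Finsupp.sub_apply,
    map_add, Finsupp.add_apply]
  have hid : ((b.tensorProduct b).repr (b k ⊗ₜ[R] b l)) (i, j)
      = (if l = j then (1:R) else 0) * (if k = i then (1:R) else 0) := by
    rw [Module.Basis.tensorProduct_repr_tmul_apply, Module.Basis.repr_self, Module.Basis.repr_self,
      Finsupp.single_apply, Finsupp.single_apply, smul_eq_mul]
  rw [hid]
  rcases le_or_gt 0 k with hk | hk <;> rcases le_or_gt 0 l with hl | hl
  · rw [hlam_nonneg k hk, hlam_nonneg l hl, TensorProduct.sum_tmul, TensorProduct.tmul_sum]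
    simp only [map_sum, TensorProduct.assoc_tmul, TensorProduct.assoc_symm_tmul,
      TensorProduct.map_tmul, LinearMap.id_coe, id_eq, rTensor_tmul, hmu,
      Finsupp.coe_finset_sum, Finset.sum_apply]
    have h1 : ∀ t ∈ Finset.range (k.toNat + 1),
        ((b.tensorProduct b).repr (b (t : ℤ) ⊗ₜ[R] b (k - (t : ℤ) + l))) (i, j)
          = if (0 : ℤ) + (t : ℤ) = i then
              (if k - (t : ℤ) + l = j then (1:R) else 0) else 0 := by
      intro t _
      rw [Module.Basis.tensorProduct_repr_tmul_apply, Module.Basis.repr_self, Module.Basis.repr_self,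
        Finsupp.single_apply, Finsupp.single_apply, smul_eq_mul]
      split_ifs <;> first | (exfalso; omega) | ring1
    have h2 : ∀ t ∈ Finset.range (l.toNat + 1),
        ((b.tensorProduct b).repr (b (k + (t : ℤ)) ⊗ₜ[R] b (l - (t : ℤ)))) (i, j)
          = if k + (t : ℤ) = i then
              (if l - (t : ℤ) = j then (1:R) else 0) else 0 := by
      intro t _
      rw [Module.Basis.tensorProduct_repr_tmul_apply, Module.Basis.repr_self, Module.Basis.repr_self,
        Finsupp.single_apply, Finsupp.single_apply, smul_eq_mul]
      split_ifs <;> first | (exfalso; omega) | ring1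
    rw [Finset.sum_congr rfl h1,
      sum_if_pin_add _ _ _ (fun w => if k - w + l = j then (1:R) else 0),
      Finset.sum_congr rfl h2,
      sum_if_pin_add _ _ _ (fun w => if l - w = j then (1:R) else 0)]
    split_ifs <;> first | (exfalso; omega) | norm_num
  · rw [hlam_nonneg k hk, hlam_neg l hl, TensorProduct.sum_tmul, TensorProduct.tmul_neg,
      TensorProduct.tmul_sum]
    simp only [map_neg, map_sum, TensorProduct.assoc_tmul, TensorProduct.assoc_symm_tmul,
      TensorProduct.map_tmul, LinearMap.id_coe, id_eq, rTensor_tmul, hmu,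
      Finsupp.coe_neg, Pi.neg_apply, Finsupp.coe_finset_sum, Finset.sum_apply]
    have h1 : ∀ t ∈ Finset.range (k.toNat + 1),
        ((b.tensorProduct b).repr (b (t : ℤ) ⊗ₜ[R] b (k - (t : ℤ) + l))) (i, j)
          = if (0 : ℤ) + (t : ℤ) = i then
              (if k - (t : ℤ) + l = j then (1:R) else 0) else 0 := by
      intro t _
      rw [Module.Basis.tensorProduct_repr_tmul_apply, Module.Basis.repr_self, Module.Basis.repr_self,
        Finsupp.single_apply, Finsupp.single_apply, smul_eq_mul]
      split_ifs <;> first | (exfalso; omega) | ring1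
    have h2 : ∀ t ∈ Finset.range (-(l + 1)).toNat,
        ((b.tensorProduct b).repr (b (k + (l + 1 + (t : ℤ))) ⊗ₜ[R] b (-1 - (t : ℤ)))) (i, j)
          = if (k + l + 1) + (t : ℤ) = i then
              (if (-1 : ℤ) - (t : ℤ) = j then (1:R) else 0) else 0 := by
      intro t _
      rw [Module.Basis.tensorProduct_repr_tmul_apply, Module.Basis.repr_self, Module.Basis.repr_self,
        Finsupp.single_apply, Finsupp.single_apply, smul_eq_mul]
      split_ifs <;> first | (exfalso; omega) | ring1
    rw [Finset.sum_congr rfl h1,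
      sum_if_pin_add _ _ _ (fun w => if k - w + l = j then (1:R) else 0),
      Finset.sum_congr rfl h2,
      sum_if_pin_add _ _ _ (fun w => if (-1 : ℤ) - w = j then (1:R) else 0)]
    split_ifs <;> first | (exfalso; omega) | norm_num
  · rw [hlam_neg k hk, hlam_nonneg l hl, TensorProduct.neg_tmul, TensorProduct.sum_tmul,
      TensorProduct.tmul_sum]
    simp only [map_neg, map_sum, TensorProduct.assoc_tmul, TensorProduct.assoc_symm_tmul,
      TensorProduct.map_tmul, LinearMap.id_coe, id_eq, rTensor_tmul, hmu,
      Finsupp.coe_neg, Pi.neg_apply, Finsupp.coe_finset_sum, Finset.sum_apply]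
    have h1 : ∀ t ∈ Finset.range (-(k + 1)).toNat,
        ((b.tensorProduct b).repr (b (k + 1 + (t : ℤ)) ⊗ₜ[R] b (-1 - (t : ℤ) + l))) (i, j)
          = if (k + 1) + (t : ℤ) = i then
              (if (-1 : ℤ) - (t : ℤ) + l = j then (1:R) else 0) else 0 := by
      intro t _
      rw [Module.Basis.tensorProduct_repr_tmul_apply, Module.Basis.repr_self, Module.Basis.repr_self,
        Finsupp.single_apply, Finsupp.single_apply, smul_eq_mul]
      split_ifs <;> first | (exfalso; omega) | ring1
    have h2 : ∀ t ∈ Finset.range (l.toNat + 1),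
        ((b.tensorProduct b).repr (b (k + (t : ℤ)) ⊗ₜ[R] b (l - (t : ℤ)))) (i, j)
          = if k + (t : ℤ) = i then
              (if l - (t : ℤ) = j then (1:R) else 0) else 0 := by
      intro t _
      rw [Module.Basis.tensorProduct_repr_tmul_apply, Module.Basis.repr_self, Module.Basis.repr_self,
        Finsupp.single_apply, Finsupp.single_apply, smul_eq_mul]
      split_ifs <;> first | (exfalso; omega) | ring1
    rw [Finset.sum_congr rfl h1,
      sum_if_pin_add _ _ _ (fun w => if (-1 : ℤ) - w + l = j then (1:R) else 0),
      Finset.sum_congr rfl h2,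
      sum_if_pin_add _ _ _ (fun w => if l - w = j then (1:R) else 0)]
    split_ifs <;> first | (exfalso; omega) | norm_num
  · rw [hlam_neg k hk, hlam_neg l hl, TensorProduct.neg_tmul, TensorProduct.sum_tmul,
      TensorProduct.tmul_neg, TensorProduct.tmul_sum]
    simp only [map_neg, map_sum, TensorProduct.assoc_tmul, TensorProduct.assoc_symm_tmul,
      TensorProduct.map_tmul, LinearMap.id_coe, id_eq, rTensor_tmul, hmu,
      Finsupp.coe_neg, Pi.neg_apply, Finsupp.coe_finset_sum, Finset.sum_apply]
    have h1 : ∀ t ∈ Finset.range (-(k + 1)).toNat,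
        ((b.tensorProduct b).repr (b (k + 1 + (t : ℤ)) ⊗ₜ[R] b (-1 - (t : ℤ) + l))) (i, j)
          = if (k + 1) + (t : ℤ) = i then
              (if (-1 : ℤ) - (t : ℤ) + l = j then (1:R) else 0) else 0 := by
      intro t _
      rw [Module.Basis.tensorProduct_repr_tmul_apply, Module.Basis.repr_self, Module.Basis.repr_self,
        Finsupp.single_apply, Finsupp.single_apply, smul_eq_mul]
      split_ifs <;> first | (exfalso; omega) | ring1
    have h2 : ∀ t ∈ Finset.range (-(l + 1)).toNat,
        ((b.tensorProduct b).repr (b (k + (l + 1 + (t : ℤ))) ⊗ₜ[R] b (-1 - (t : ℤ)))) (i, j)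
          = if (k + l + 1) + (t : ℤ) = i then
              (if (-1 : ℤ) - (t : ℤ) = j then (1:R) else 0) else 0 := by
      intro t _
      rw [Module.Basis.tensorProduct_repr_tmul_apply, Module.Basis.repr_self, Module.Basis.repr_self,
        Finsupp.single_apply, Finsupp.single_apply, smul_eq_mul]
      split_ifs <;> first | (exfalso; omega) | ring1
    rw [Finset.sum_congr rfl h1,
      sum_if_pin_add _ _ _ (fun w => if (-1 : ℤ) - w + l = j then (1:R) else 0),
      Finset.sum_congr rfl h2,
      sum_if_pin_add _ _ _ (fun w => if (-1 : ℤ) - w = j then (1:R) else 0)]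
    split_ifs <;> first | (exfalso; omega) | norm_num



/-- Let `A = R[U,U⁻¹]` be the Laurent polynomial ring concentrated in
degree `0` (modeling `H_*ΩS¹`), i.e. a free module with basis `{U^k : k ∈ ℤ}`, with
product `μ(U^k ⊗ U^l) = U^{k+l}`, unit `η = U^0`, and coproduct
`λ₊(U^k) = Σ_{i=0}^{k} U^i ⊗ U^{k-i}` for `k ≥ 0`,
`λ₊(U^k) = -Σ_{i=k+1}^{-1} U^i ⊗ U^{k-i}` for `k < 0`.
Then `λ₊` is coassociative, cocommutative, satisfies `λ₊(1) = 1 ⊗ 1`, and the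
Loday–Ronco unital infinitesimal relation holds:
`λ₊μ = (1⊗μ)(λ₊⊗1) + (μ⊗1)(1⊗λ₊) - 1`, i.e.
`λ₊(ab) = Σ a' ⊗ a''b + Σ ab' ⊗ b'' - a ⊗ b`.
(All elements have degree `0`, so no Koszul signs arise and the twist is the plain flip.) -/
theorem circle_based_loop_bialgebra {R : Type} [CommRing R] {A : Type} [AddCommGroup A]
    [Module R A] (b : Module.Basis ℤ R A)
    (mu : A ⊗[R] A →ₗ[R] A) (lam : A →ₗ[R] A ⊗[R] A)
    (hmu : ∀ k l : ℤ, mu (b k ⊗ₜ[R] b l) = b (k + l))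
    (hlam_nonneg : ∀ k : ℤ, 0 ≤ k →
      lam (b k) = ∑ i ∈ Finset.range (k.toNat + 1), b (i : ℤ) ⊗ₜ[R] b (k - (i : ℤ)))
    (hlam_neg : ∀ k : ℤ, k < 0 →
      lam (b k) = -∑ i ∈ Finset.range (-(k + 1)).toNat,
        b (k + 1 + (i : ℤ)) ⊗ₜ[R] b (-1 - (i : ℤ))) :
    -- coassociativity
    ((LinearMap.rTensor A lam).comp lam =
      (TensorProduct.assoc R A A A).symm.toLinearMap.comp
        ((TensorProduct.map LinearMap.id lam).comp lam)) ∧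
    -- cocommutativity (degree 0: the twist is the plain flip)
    ((TensorProduct.comm R A A).toLinearMap.comp lam = lam) ∧
    -- λ₊(1) = 1 ⊗ 1
    (lam (b 0) = b 0 ⊗ₜ[R] b 0) ∧
    -- Loday–Ronco unital infinitesimal relation
    (lam.comp mu =
      (TensorProduct.map LinearMap.id mu).comp
        ((TensorProduct.assoc R A A A).toLinearMap.comp (LinearMap.rTensor A lam))
      + (LinearMap.rTensor A mu).comp
        ((TensorProduct.assoc R A A A).symm.toLinearMap.comp
          (TensorProduct.map LinearMap.id lam))
      - LinearMap.id) := by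
  refine ⟨coassoc b lam hlam_nonneg hlam_neg, cocomm b lam hlam_nonneg hlam_neg, ?_,
    infini b mu lam hmu hlam_nonneg hlam_neg⟩
  have h := hlam_nonneg 0 le_rfl
  simpa using h

end CircleLoop
end
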